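/- Let B_1,…,B_ℓ ⊆ ℤ, let i ∈ {1,…,ℓ}, let k be a positive integer, and write k = aℓ + b where a ∈ ℤ and b is the unique integer with 1−i ≤ b ≤ ℓ−i and b ≡ k (mod ℓ). Let y ∈ ℤ. Then: (1) υ_{e,ℓ,i}(y) − ke = υ_{e,ℓ,i+b}(y − ae), υ_{e,2,1}(y) − (2a+1)e = υ_{e,2,2}(y − ae), and υ_{e,2,2}(y) − (2a−1)e = υ_{e,2,1}(y − ae). (2) The following are equivalent: υ_{e,ℓ,i}(y) − ke ∉ U_{e,ℓ}(B_1,…,B_ℓ); y − ae ∉ B_{i+b}; υ_{e,2,1}(y) − (2a+1)e ∉ U_{e,2}(B_i, B_{i+b}); υ_{e,2,2}(y) − (2a−1)e ∉ U_{e,2}(B_{i+b}, B_i). (3) If moreover y ∈ B_i and y − ae ∉ B_{i+b}, then the set U′ := U_{e,2}(B_{min(i,i+b)}, B_{max(i,i+b)}) contains an element w with w − e ∉ U′ (so U′ has positive e-weight). -/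
import Mathlib


/-- Uglov's map `υ_{e,m,i}` : if `x = a·e + b` with `0 ≤ b < e` then
`υ_{e,m,i}(x) = a·e·m + (m−i)·e + b`. -/
def upsilon (e m i x : ℤ) : ℤ := x / e * e * m + (m - i) * e + x % e

/-- Uglov's set `U_{e,m}(C_1,…,C_m) = ⋃_{i=1}^{m} υ_{e,m,i}(C_i)`. -/
def UglovSet (e m : ℤ) (C : ℤ → Set ℤ) : Set ℤ :=
  {y : ℤ | ∃ i x : ℤ, 1 ≤ i ∧ i ≤ m ∧ x ∈ C i ∧ upsilon e m i x = y}

lemma upsilon_eq (e m j x : ℤ) :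
    upsilon e m j x = x % e + (x / e * m + (m - j)) * e := by
  unfold upsilon; ring

lemma upsilon_emod (e m j x : ℤ) (he : 0 < e) : upsilon e m j x % e = x % e := by
  rw [upsilon_eq, Int.add_mul_emod_self_right, Int.emod_emod_of_dvd _ dvd_rfl]

lemma upsilon_ediv (e m j x : ℤ) (he : 0 < e) :
    upsilon e m j x / e = x / e * m + (m - j) := by
  rw [upsilon_eq, Int.add_mul_ediv_right _ _ he.ne',
    Int.ediv_eq_zero_of_lt (Int.emod_nonneg x he.ne') (Int.emod_lt_of_pos x he), zero_add]

lemma upsilon_inj (e m : ℤ) (he : 0 < e) (hm : 0 < m) {j x j' x' : ℤ}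
    (hj1 : 1 ≤ j) (hj2 : j ≤ m) (hj'1 : 1 ≤ j') (hj'2 : j' ≤ m)
    (h : upsilon e m j x = upsilon e m j' x') : j = j' ∧ x = x' := by
  have hmod : x % e = x' % e := by
    have := congrArg (· % e) h
    simpa [upsilon_emod _ _ _ _ he] using this
  have hdiv : x / e * m + (m - j) = x' / e * m + (m - j') := by
    have := congrArg (· / e) h
    simpa [upsilon_ediv _ _ _ _ he] using this
  have hdvd : j - j' = (x / e - x' / e) * m := by
    have := sub_mul (x/e) (x'/e) m
    linarith
  have hjj : j = j' := by
    rcases lt_trichotomy (x / e - x' / e) 0 with hc | hc | hc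
    · nlinarith
    · rw [hc, zero_mul] at hdvd; omega
    · nlinarith
  refine ⟨hjj, ?_⟩
  subst hjj
  have hdd : x / e = x' / e := by
    have := mul_right_cancel₀ hm.ne' (by linarith : x / e * m = x' / e * m)
    exact this
  have h1 := Int.mul_ediv_add_emod x e
  have h2 := Int.mul_ediv_add_emod x' e
  rw [hdd] at h1
  linarith

lemma mem_uglov (e m : ℤ) (he : 0 < e) (hm : 0 < m) (C : ℤ → Set ℤ) {j : ℤ} (x : ℤ)
    (hj1 : 1 ≤ j) (hj2 : j ≤ m) :
    upsilon e m j x ∈ UglovSet e m C ↔ x ∈ C j := by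
  constructor
  · rintro ⟨i', x', hi1, hi2, hx', heq⟩
    obtain ⟨rfl, rfl⟩ := upsilon_inj e m he hm hi1 hi2 hj1 hj2 heq
    exact hx'
  · intro hx
    exact ⟨j, x, hj1, hj2, hx, rfl⟩

lemma descent (S : Set ℤ) (e : ℤ) (N : ℤ) (hN : 1 ≤ N) :
    ∀ u, u ∈ S → u - N * e ∉ S → ∃ w ∈ S, w - e ∉ S := by
  obtain ⟨n, rfl⟩ : ∃ n : ℕ, N = (n : ℤ) + 1 := ⟨(N - 1).toNat, by omega⟩
  clear hN
  induction n with
  | zero =>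
    intro u hu hnu
    exact ⟨u, hu, by simpa using hnu⟩
  | succ n ih =>
    intro u hu hnu
    by_cases hmem : u - e ∈ S
    · refine ih (u - e) hmem ?_
      have h' : u - e - ((n : ℤ) + 1) * e = u - ((↑(n + 1) : ℤ) + 1) * e := by
        push_cast; ring
      rw [h']
      exact hnu
    · exact ⟨u, hu, hmem⟩

theorem uglov_weight_bipartition (e ℓ : ℤ) (he : 2 ≤ e) (hl : 1 ≤ ℓ) (B : ℤ → Set ℤ)
    (i k a b : ℤ) (hi1 : 1 ≤ i) (hi2 : i ≤ ℓ) (hk : 1 ≤ k)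
    (hkab : k = a * ℓ + b) (hb1 : 1 - i ≤ b) (hb2 : b ≤ ℓ - i) (y : ℤ) :
    (upsilon e ℓ i y - k * e = upsilon e ℓ (i + b) (y - a * e) ∧
      upsilon e 2 1 y - (2 * a + 1) * e = upsilon e 2 2 (y - a * e) ∧
      upsilon e 2 2 y - (2 * a - 1) * e = upsilon e 2 1 (y - a * e)) ∧
    ((upsilon e ℓ i y - k * e ∉ UglovSet e ℓ B ↔ y - a * e ∉ B (i + b)) ∧
      (y - a * e ∉ B (i + b) ↔
        upsilon e 2 1 y - (2 * a + 1) * e ∉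
          UglovSet e 2 (fun r => if r = 1 then B i else B (i + b))) ∧
      (y - a * e ∉ B (i + b) ↔
        upsilon e 2 2 y - (2 * a - 1) * e ∉
          UglovSet e 2 (fun r => if r = 1 then B (i + b) else B i))) ∧
    (y ∈ B i → y - a * e ∉ B (i + b) →
      ∃ w ∈ UglovSet e 2 (fun r => if r = 1 then B (min i (i + b)) else B (max i (i + b))),
        w - e ∉
          UglovSet e 2 (fun r => if r = 1 then B (min i (i + b)) else B (max i (i + b)))) := by
  have he0 : (0:ℤ) < e := by linarith
  have hdiv : (y - a * e) / e = y / e - a := by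
    rw [sub_eq_add_neg, ← neg_mul, Int.add_mul_ediv_right _ _ he0.ne']
    ring
  have hmod : (y - a * e) % e = y % e := by
    rw [sub_eq_add_neg, ← neg_mul, Int.add_mul_emod_self_right]
  have heq1 : upsilon e ℓ i y - k * e = upsilon e ℓ (i + b) (y - a * e) := by
    unfold upsilon
    rw [hdiv, hmod, hkab]
    ring
  have heq2 : upsilon e 2 1 y - (2 * a + 1) * e = upsilon e 2 2 (y - a * e) := by
    unfold upsilon
    rw [hdiv, hmod]
    ring
  have heq3 : upsilon e 2 2 y - (2 * a - 1) * e = upsilon e 2 1 (y - a * e) := by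
    unfold upsilon
    rw [hdiv, hmod]
    ring
  have hib1 : 1 ≤ i + b := by omega
  have hib2 : i + b ≤ ℓ := by omega
  have hiff1 : upsilon e ℓ i y - k * e ∉ UglovSet e ℓ B ↔ y - a * e ∉ B (i + b) := by
    rw [heq1]
    exact not_congr (mem_uglov e ℓ he0 (by linarith) B _ hib1 hib2)
  have hiff2 : y - a * e ∉ B (i + b) ↔
      upsilon e 2 1 y - (2 * a + 1) * e ∉
        UglovSet e 2 (fun r => if r = 1 then B i else B (i + b)) := by
    rw [heq2]
    have := mem_uglov e 2 he0 (by norm_num)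
      (fun r => if r = 1 then B i else B (i + b)) (y - a * e)
      (by norm_num : (1:ℤ) ≤ 2) le_rfl
    simp only [show (2:ℤ) ≠ 1 by norm_num, if_neg] at this
    exact (not_congr this).symm
  have hiff3 : y - a * e ∉ B (i + b) ↔
      upsilon e 2 2 y - (2 * a - 1) * e ∉
        UglovSet e 2 (fun r => if r = 1 then B (i + b) else B i) := by
    rw [heq3]
    have := mem_uglov e 2 he0 (by norm_num)
      (fun r => if r = 1 then B (i + b) else B i) (y - a * e)
      le_rfl (by norm_num : (1:ℤ) ≤ 2)
    simp only [if_pos rfl] at this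
    exact (not_congr this).symm
  refine ⟨⟨heq1, heq2, heq3⟩, ⟨hiff1, hiff2, hiff3⟩, ?_⟩
  intro hy hyn
  rcases le_or_gt 0 b with hbpos | hbneg
  · -- b ≥ 0 : min = i, max = i + b
    have hle : i ≤ i + b := by omega
    simp only [min_eq_left hle, max_eq_right hle]
    have ha : 0 ≤ a := by nlinarith
    have hu : upsilon e 2 1 y ∈
        UglovSet e 2 (fun r => if r = 1 then B i else B (i + b)) := by
      rw [mem_uglov e 2 he0 (by norm_num) _ _ le_rfl (by norm_num)]
      simpa using hy
    have hnu : upsilon e 2 1 y - (2 * a + 1) * e ∉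
        UglovSet e 2 (fun r => if r = 1 then B i else B (i + b)) :=
      hiff2.mp hyn
    exact descent _ e (2 * a + 1) (by omega) _ hu hnu
  · -- b < 0 : min = i + b, max = i
    have hle : i + b ≤ i := by omega
    simp only [min_eq_right hle, max_eq_left hle]
    have ha : 1 ≤ a := by nlinarith
    have hu : upsilon e 2 2 y ∈
        UglovSet e 2 (fun r => if r = 1 then B (i + b) else B i) := by
      rw [mem_uglov e 2 he0 (by norm_num) _ _ (by norm_num) le_rfl]
      simpa using hy
    have hnu : upsilon e 2 2 y - (2 * a - 1) * e ∉
        UglovSet e 2 (fun r => if r = 1 then B (i + b) else B i) :=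
      hiff3.mp hyn
    exact descent _ e (2 * a - 1) (by omega) _ hu hnu
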